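/- arXiv:0704.2282 — 2 statements merged into one kernel-verified Lean document; each statement's English description precedes it below -/
import Mathlib

section
/- Let G be a connected graph with port set P = pG and signature ε = sG, and let r = #G + 1 − #nG, where #G is the number of edges and #nG the number of nodes of G. Then for every port assignment g ⊆ P whose cardinality is congruent to ε modulo 2, the number of semi-Kekulé states W of G with W|P = g is exactly 2^r. -/
/-!
Encode a subgraph `W ⊆ G` by its indicator vector in `𝔽₂^G`; the incidence map
`𝔽₂^G → 𝔽₂^{nG}` sends it to the degrees of `W` mod 2. Since a port lies in at most one edge of
`W`, "semi-Kekulé with `W|P = g`" says exactly that this degree vector is the indicator of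
`internal G ∪ g`. The incidence map lands in the hyperplane of vectors with coordinate sum `0`
(every edge has two ends), and for connected `G` it fills it: a walk from `p` to `q` gives
`δ_p - δ_q`. The target has coordinate sum `#internal + #g = 0` by the parity hypothesis, so the
solutions form a coset of the kernel, of dimension `#G - (#nG - 1) = r`.
-/

open scoped symmDiff

namespace Kekule

abbrev Node := ℕ
abbrev Graph := Finset (Finset Node)

/-- `G` is a graph: every edge is a 2-element set of nodes. -/
def IsGraph (G : Graph) : Prop := ∀ e ∈ G, e.card = 2

/-- The nodes of a graph: the elements of its edges. -/
def nodes (G : Graph) : Finset Node := G.biUnion id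

/-- The number of edges of `G` containing `v`. -/
def deg (G : Graph) (v : Node) : ℕ := (G.filter (fun e => v ∈ e)).card

/-- A port is a node contained in exactly one edge. -/
def ports (G : Graph) : Finset Node := (nodes G).filter (fun v => deg G v = 1)

/-- An internal node is a node that is not a port. -/
def internal (G : Graph) : Finset Node := (nodes G).filter (fun v => deg G v ≠ 1)

/-- A Kekulé state of `G`: a subgraph `W ⊆ G` such that every internal node
of `G` lies in exactly one edge of `W`. -/
def IsKekule (G W : Graph) : Prop := W ⊆ G ∧ ∀ v ∈ internal G, deg W v = 1

/-- A curve in `G`: a subgraph `C ⊆ G` such that every node of `C` that is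
internal in `G` lies in exactly two edges of `C`. -/
def IsCurve (G C : Graph) : Prop :=
  C ⊆ G ∧ ∀ v ∈ nodes C, v ∈ internal G → deg C v = 2

/-- `(C, W)` is an alternating curve in `G`: both are subgraphs of `G`,
`C` is a curve in `G`, and `W ∩ C` is a Kekulé state of `C`. -/
def IsAlternating (G C W : Graph) : Prop :=
  W ⊆ G ∧ IsCurve G C ∧ IsKekule C (W ∩ C)

/-- `W|P`: the set of ports in `P` that lie in some edge of `W`. -/
def rest (W : Graph) (P : Finset Node) : Finset Node := P ∩ nodes W

/-- The set of Kekulé port assignments of `G`. -/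
def KP (G : Graph) : Set (Finset Node) :=
  {g | ∃ W, IsKekule G W ∧ rest W (ports G) = g}

/-- A cell `K` over `P` is a Kekulé cell if it is the set of Kekulé port
assignments of some graph with port set `P`. -/
def IsKekuleCell (P : Finset Node) (K : Set (Finset Node)) : Prop :=
  ∃ G, IsGraph G ∧ ports G = P ∧ KP G = K

/-- A channel: a 2-element subset of `P`. -/
def IsChannel (P : Finset Node) (c : Finset Node) : Prop := c ⊆ P ∧ c.card = 2

/-- A port `p` is flexible for a cell `K`. -/
def Flexible (K : Set (Finset Node)) (p : Node) : Prop :=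
  ∃ g ∈ K, ∃ g' ∈ K, p ∈ g ∧ p ∉ g'

/-- Hamming distance between two port assignments. -/
def hdist (k k' : Finset Node) : ℕ := (k ∆ k').card

/-- The Hamming diameter of `K` equals `n`. -/
def HamDiamEq (K : Set (Finset Node)) (n : ℕ) : Prop :=
  (∃ k ∈ K, ∃ k' ∈ K, hdist k k' = n) ∧ ∀ k ∈ K, ∀ k' ∈ K, hdist k k' ≤ n

/-- `G` is connected: nonempty, and any two distinct nodes are joined by a walk. -/
def Connected (G : Graph) : Prop :=
  G.Nonempty ∧ ∀ p ∈ nodes G, ∀ q ∈ nodes G, p ≠ q →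
    ∃ (n : ℕ) (f : ℕ → Node), f 0 = p ∧ f n = q ∧
      ∀ i < n, ({f i, f (i + 1)} : Finset Node) ∈ G

/-- `C` is a simple path between `p` and `q`. -/
def IsSimplePath (C : Graph) (p q : Node) : Prop :=
  Connected C ∧ ports C = {p, q} ∧
    ∀ v ∈ nodes C, v ≠ p → v ≠ q → deg C v = 2

/-- A cycle: a connected graph all of whose nodes lie in exactly two edges. -/
def IsCycle (C : Graph) : Prop :=
  Connected C ∧ ∀ v ∈ nodes C, deg C v = 2

/-- A semi-Kekulé state of `G`: every internal node of `G` lies in an odd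
number of edges of `W`. -/
def IsSemiKekule (G W : Graph) : Prop :=
  W ⊆ G ∧ ∀ v ∈ internal G, deg W v % 2 = 1

/-- The signature of `G`. -/
def sig (G : Graph) : ℕ := (internal G).card % 2

/-- `G` is omniconjugated. -/
def Omniconjugated (G : Graph) : Prop :=
  2 ≤ (ports G).card ∧ KP G = {g | g ⊆ ports G ∧ g.card % 2 = sig G}

instance : Std.Commutative (α := Finset Node) (· ∆ ·) := ⟨symmDiff_comm⟩
instance : Std.Associative (α := Finset Node) (· ∆ ·) := ⟨symmDiff_assoc⟩

/-- The `⊕`-sum of a finite family of port assignments. -/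
def xorSum (D : Finset (Finset Node)) : Finset Node := D.fold (· ∆ ·) ∅ id

end Kekule

open Finset

section LinearAlgebra

lemma natCard_fiber_eq_natCard_ker {R M N : Type*} [Semiring R] [AddCommGroup M]
    [AddCommGroup N] [Module R M] [Module R N] (f : M →ₗ[R] N) {x₀ : M} {b : N}
    (h : f x₀ = b) : Nat.card {x // f x = b} = Nat.card (LinearMap.ker f) := by
  subst h
  exact Nat.card_congr (f.toAddMonoidHom.fiberEquivKer x₀)

variable (ι R : Type*) [Fintype ι] [CommSemiring R]

def coordSum : (ι → R) →ₗ[R] R :=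
  ∑ i, LinearMap.proj i

variable {ι R}

@[simp]
lemma coordSum_apply (x : ι → R) : coordSum ι R x = ∑ i, x i := by
  simp [coordSum]

lemma finrank_ker_coordSum {K : Type*} [Field K] [Nonempty ι] :
    Module.finrank K (LinearMap.ker (coordSum ι K)) = Fintype.card ι - 1 := by
  classical
  have hsurj : LinearMap.range (coordSum ι K) = ⊤ :=
    LinearMap.range_eq_top.2 fun c => ⟨Pi.single (Classical.arbitrary ι) c, by simp⟩
  have hrank := (coordSum ι K).finrank_range_add_finrank_ker
  rw [hsurj, finrank_top, Module.finrank_self, Module.finrank_fintype_fun_eq_card] at hrank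
  omega

end LinearAlgebra

namespace Kekule

section Incidence

variable {G W : Graph} {g : Finset Node} {v : Node}

lemma mem_nodes : v ∈ nodes W ↔ ∃ e ∈ W, v ∈ e := by
  simp [nodes]

lemma edge_subset_nodes {e : Finset Node} (he : e ∈ G) : e ⊆ nodes G :=
  subset_biUnion_of_mem id he

lemma nodes_nonempty (hG : IsGraph G) (hconn : Connected G) : (nodes G).Nonempty := by
  obtain ⟨e, he⟩ := hconn.1
  obtain ⟨v, hv⟩ := card_pos.1 (by rw [hG e he]; omega : 0 < #e)
  exact ⟨v, edge_subset_nodes he hv⟩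

lemma deg_eq_zero_iff : deg W v = 0 ↔ v ∉ nodes W := by
  simp [deg, filter_eq_empty_iff, mem_nodes]

lemma deg_le_deg (h : W ⊆ G) (v : Node) : deg W v ≤ deg G v :=
  card_le_card (filter_subset_filter _ h)

variable (G) in
lemma internal_subset_nodes : internal G ⊆ nodes G := filter_subset _ _

variable (G) in
lemma ports_subset_nodes : ports G ⊆ nodes G := filter_subset _ _

variable (G) in
lemma disjoint_internal_ports : Disjoint (internal G) (ports G) :=
  disjoint_filter.2 fun _ _ h h' => h h'

lemma mem_ports_of_notMem_internal (hv : v ∈ nodes G) (hi : v ∉ internal G) : v ∈ ports G := by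
  simp_all [internal, ports]

variable (G) in
def incidence : (G → ZMod 2) →ₗ[ZMod 2] (nodes G → ZMod 2) where
  toFun x v := ∑ e ∈ univ.filter fun e : G => (v : Node) ∈ (e : Finset Node), x e
  map_add' x y := by ext; simp [sum_add_distrib]
  map_smul' c x := by ext; simp [mul_sum]

variable (G) in
def nodeIndicator (s : Finset Node) : nodes G → ZMod 2 :=
  fun v => if (v : Node) ∈ s then 1 else 0

variable (G) in
def edgeIndicator (W : Graph) : G → ZMod 2 :=
  fun e => if (e : Finset Node) ∈ W then 1 else 0

lemma incidence_single (e : G) (c : ZMod 2) :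
    incidence G (Pi.single e c) = c • nodeIndicator G e := by
  ext v
  simp [incidence, nodeIndicator, sum_pi_single']

lemma incidence_edgeIndicator (hW : W ⊆ G) (v : nodes G) :
    incidence G (edgeIndicator G W) v = deg W v := by
  simp only [incidence, edgeIndicator, LinearMap.coe_mk, AddHom.coe_mk, sum_boole, filter_filter,
    deg]
  congr 1
  refine card_bij (fun e _ => e.1) (fun e he => ?_) (fun _ _ _ _ => Subtype.ext) fun e he => ?_
  · simp_all
  · simp only [mem_filter] at he
    exact ⟨⟨e, hW he.1⟩, by simp [he.1, he.2], rfl⟩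

lemma coordSum_nodeIndicator {s : Finset Node} (hs : s ⊆ nodes G) :
    coordSum _ _ (nodeIndicator G s) = #s := by
  simp only [coordSum_apply, nodeIndicator]
  rw [sum_coe_sort (nodes G) (fun v => if v ∈ s then (1 : ZMod 2) else 0), sum_boole,
    filter_mem_eq_inter, inter_eq_right.2 hs]

lemma coordSum_comp_incidence (hG : IsGraph G) : (coordSum _ _).comp (incidence G) = 0 := by
  refine LinearMap.pi_ext fun e c => ?_
  rw [LinearMap.comp_apply, incidence_single, map_smul,
    coordSum_nodeIndicator (edge_subset_nodes e.2), hG _ e.2, ZMod.natCast_self, smul_zero]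
  rfl

lemma nodeIndicator_sub_mem_range_of_pair_mem (hG : IsGraph G) {p q : Node}
    (he : ({p, q} : Finset Node) ∈ G) :
    nodeIndicator G {p} - nodeIndicator G {q} ∈ LinearMap.range (incidence G) := by
  have hpq : p ≠ q := by
    rintro rfl
    simpa using hG _ he
  refine ⟨Pi.single ⟨_, he⟩ 1, ?_⟩
  ext w
  by_cases hp : (w : Node) = p <;> by_cases hq : (w : Node) = q <;>
    simp_all [incidence_single, nodeIndicator, CharTwo.sub_eq_add]

lemma nodeIndicator_sub_mem_range_of_walk (hG : IsGraph G) (f : ℕ → Node) (n : ℕ)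
    (hf : ∀ i < n, ({f i, f (i + 1)} : Finset Node) ∈ G) :
    nodeIndicator G {f 0} - nodeIndicator G {f n} ∈ LinearMap.range (incidence G) := by
  induction n with
  | zero => simp
  | succ n ih =>
    rw [← sub_add_sub_cancel _ (nodeIndicator G {f n})]
    exact add_mem (ih fun i hi => hf i (by omega))
      (nodeIndicator_sub_mem_range_of_pair_mem hG (hf n (by omega)))

lemma range_incidence (hG : IsGraph G) (hconn : Connected G) :
    LinearMap.range (incidence G) = LinearMap.ker (coordSum _ _) := by
  refine le_antisymm (LinearMap.range_le_ker_iff.2 (coordSum_comp_incidence hG)) fun y hy => ?_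
  obtain ⟨v₀, hv₀⟩ := nodes_nonempty hG hconn
  have hsub : ∀ v : nodes G,
      nodeIndicator G {(v : Node)} - nodeIndicator G {v₀} ∈ LinearMap.range (incidence G) := by
    intro v
    by_cases h : (v : Node) = v₀
    · simp [h]
    obtain ⟨n, f, hf0, hfn, hf⟩ := hconn.2 v v.2 v₀ hv₀ h
    rw [← hf0, ← hfn]
    exact nodeIndicator_sub_mem_range_of_walk hG f n hf
  have hy' : y = ∑ v, y v • (nodeIndicator G {(v : Node)} - nodeIndicator G {v₀}) := by
    rw [LinearMap.mem_ker, coordSum_apply] at hy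
    simp_rw [smul_sub, sum_sub_distrib, ← sum_smul, hy, zero_smul, sub_zero]
    ext w
    simp only [Finset.sum_apply, Pi.smul_apply, nodeIndicator, mem_singleton, smul_eq_mul,
      mul_ite, mul_one, mul_zero, ← Subtype.ext_iff]
    simp
  rw [hy']
  exact sum_mem fun v _ => Submodule.smul_mem _ _ (hsub v)

lemma natCard_ker_incidence (hG : IsGraph G) (hconn : Connected G) :
    Nat.card (LinearMap.ker (incidence G)) = 2 ^ (#G + 1 - #(nodes G)) := by
  have hne := nodes_nonempty hG hconn
  have := hne.coe_sort
  have hrank := (incidence G).finrank_range_add_finrank_ker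
  rw [range_incidence hG hconn, finrank_ker_coordSum, Module.finrank_fintype_fun_eq_card,
    Fintype.card_coe, Fintype.card_coe] at hrank
  rw [Module.natCard_eq_pow_finrank (K := ZMod 2), Nat.card_zmod]
  have := hne.card_pos
  congr 1
  omega

variable (G) in
def subgraphEquiv : {W : Graph // W ⊆ G} ≃ (G → ZMod 2) where
  toFun W := edgeIndicator G W
  invFun x := ⟨(univ.filter fun e => x e = 1).map (Function.Embedding.subtype _), by
    intro e he
    obtain ⟨e', -, rfl⟩ := mem_map.1 he
    exact e'.2⟩
  left_inv W := by
    ext e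
    simpa [edgeIndicator] using @W.2 e
  right_inv x := by
    funext e
    simp only [edgeIndicator, Function.Embedding.subtype_apply, mem_map, mem_filter, mem_univ,
      true_and, Subtype.coe_inj, exists_eq_right]
    generalize x e = a
    revert a
    decide

lemma rest_ports_eq_iff (hg : g ⊆ ports G) :
    rest W (ports G) = g ↔ ∀ v ∈ ports G, (v ∈ nodes W ↔ v ∈ g) := by
  simp only [rest, Finset.ext_iff, mem_inter]
  exact ⟨fun h v hv => by simpa [hv] using h v,
    fun h v => ⟨fun ⟨hv, hw⟩ => (h v hv).1 hw, fun hv => ⟨hg hv, (h v (hg hv)).2 hv⟩⟩⟩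

lemma natCast_deg_eq_ite_iff (hW : W ⊆ G) (hv : v ∈ nodes G) :
    ((deg W v : ZMod 2) = if v ∈ internal G ∪ g then 1 else 0) ↔
      (v ∈ internal G → deg W v % 2 = 1) ∧ (v ∈ ports G → (v ∈ nodes W ↔ v ∈ g)) := by
  by_cases hi : v ∈ internal G
  · have hp : v ∉ ports G := disjoint_left.1 (disjoint_internal_ports G) hi
    simp [hi, hp, ZMod.natCast_eq_one_iff_odd, Nat.odd_iff]
  have hp := mem_ports_of_notMem_internal hv hi
  have hle : deg W v ≤ 1 := (deg_le_deg hW v).trans (mem_filter.1 hp).2.le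
  rcases Nat.le_one_iff_eq_zero_or_eq_one.1 hle with h | h
  · simp [hi, hp, h, deg_eq_zero_iff.1 h]
  · have hvW : v ∈ nodes W := not_not.1 (deg_eq_zero_iff.not.1 (by omega))
    simp [hi, hp, h, hvW]

lemma semiKekule_and_rest_iff (hW : W ⊆ G) (hg : g ⊆ ports G) :
    (IsSemiKekule G W ∧ rest W (ports G) = g) ↔
      incidence G (edgeIndicator G W) = nodeIndicator G (internal G ∪ g) := by
  simp only [IsSemiKekule, hW, true_and, rest_ports_eq_iff hg, funext_iff,
    incidence_edgeIndicator hW, nodeIndicator, Subtype.forall]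
  refine Iff.trans ?_ (forall₂_congr fun v hv => (natCast_deg_eq_ite_iff hW hv).symm)
  exact ⟨fun ⟨hi, hp⟩ v _ => ⟨hi v, hp v⟩,
    fun h => ⟨fun v hv => (h v (internal_subset_nodes G hv)).1 hv,
      fun v hv => (h v (ports_subset_nodes G hv)).2 hv⟩⟩

def semiKekuleEquiv (hg : g ⊆ ports G) :
    {W : Graph // IsSemiKekule G W ∧ rest W (ports G) = g} ≃
      {x : G → ZMod 2 // incidence G x = nodeIndicator G (internal G ∪ g)} :=
  (Equiv.subtypeSubtypeEquivSubtype fun h => h.1.1).symm.trans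
    (Equiv.subtypeEquiv (subgraphEquiv G) fun W => semiKekule_and_rest_iff W.2 hg)

lemma coordSum_nodeIndicator_internal_union (hg : g ⊆ ports G) (hpar : #g % 2 = sig G) :
    coordSum _ _ (nodeIndicator G (internal G ∪ g)) = 0 := by
  rw [coordSum_nodeIndicator
      (union_subset (internal_subset_nodes G) (hg.trans (ports_subset_nodes G))),
    card_union_of_disjoint ((disjoint_internal_ports G).mono_right hg), Nat.cast_add,
    ← ZMod.natCast_mod #g, hpar, sig, ZMod.natCast_mod]
  exact CharTwo.add_self_eq_zero _

end Incidence

/-- For a connected graph `G` with `r = #G + 1 − #nG`, every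
port assignment of the right parity is realized by exactly `2 ^ r`
semi-Kekulé states. -/
theorem statement14 (G : Graph) (hG : IsGraph G) (hconn : Connected G)
    (r : ℕ) (hr : r = G.card + 1 - (nodes G).card)
    (g : Finset Node) (hg : g ⊆ ports G) (hpar : g.card % 2 = sig G) :
    Nat.card {W : Graph // IsSemiKekule G W ∧ rest W (ports G) = g} = 2 ^ r := by
  obtain ⟨x₀, hx₀⟩ : nodeIndicator G (internal G ∪ g) ∈ LinearMap.range (incidence G) := by
    rw [range_incidence hG hconn, LinearMap.mem_ker]
    exact coordSum_nodeIndicator_internal_union hg hpar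
  rw [Nat.card_congr (semiKekuleEquiv hg), natCard_fiber_eq_natCard_ker _ hx₀,
    natCard_ker_incidence hG hconn, hr]

end Kekule
end

section
/- Let G be an omniconjugated graph, let W be a Kekulé state of G, and let p and q be two distinct ports of G. Then there exists a subgraph C ⊆ G that is a simple path between p and q such that (C, W) is an alternating curve. -/
open scoped symmDiff

namespace Kekule

/-!
Since `G` is omniconjugated, flipping the port assignment of `W` at `p` and `q` gives a Kekulé
port assignment, realised by a Kekulé state `W'`. In `W ∆ W'` every internal node of `G` has
degree `0` or `2` (it lies in exactly one edge of `W` and one of `W'`), and the ports are exactly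
`p` and `q`. Hence the component of `p` in `W ∆ W'` is a path; it ends at `q` because a graph of
maximal degree two has an even number of ports. Its edges alternate between `W` and `W'`, so it
is an alternating curve for `W`.
-/

lemma card_symmDiff_add_two_mul_card_inter {α : Type*} [DecidableEq α] (s t : Finset α) :
    (s ∆ t).card + 2 * (s ∩ t).card = s.card + t.card := by
  have hdisj : Disjoint (s \ t) (t \ s) := disjoint_sdiff_sdiff
  rw [Finset.symmDiff_def, Finset.card_union_of_disjoint hdisj,
    ← Finset.card_sdiff_add_card_inter s t, ← Finset.card_sdiff_add_card_inter t s,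
    Finset.inter_comm t s]
  ring

lemma mem_nodes_iff {G : Graph} {v : Node} : v ∈ nodes G ↔ ∃ e ∈ G, v ∈ e := by
  simp [nodes]

lemma mem_nodes_of_mem {G : Graph} {v : Node} {e : Finset Node} (he : e ∈ G) (hv : v ∈ e) :
    v ∈ nodes G :=
  mem_nodes_iff.mpr ⟨e, he, hv⟩

lemma nodes_mono {A B : Graph} (h : A ⊆ B) : nodes A ⊆ nodes B :=
  Finset.biUnion_subset_biUnion_of_subset_left _ h

lemma deg_pos_iff {G : Graph} {v : Node} : 0 < deg G v ↔ v ∈ nodes G := by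
  simp [deg, Finset.card_pos, Finset.Nonempty, mem_nodes_iff]

lemma deg_mono {A B : Graph} (h : A ⊆ B) (v : Node) : deg A v ≤ deg B v :=
  Finset.card_le_card (Finset.filter_subset_filter _ h)

lemma deg_symmDiff_add_two_mul_deg_inter (A B : Graph) (v : Node) :
    deg (A ∆ B) v + 2 * deg (A ∩ B) v = deg A v + deg B v := by
  have hfilter : (A ∆ B).filter (v ∈ ·) = A.filter (v ∈ ·) ∆ B.filter (v ∈ ·) := by
    ext e
    simp only [Finset.mem_filter, Finset.mem_symmDiff]
    tauto
  rw [deg, deg, hfilter, Finset.filter_inter_distrib]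
  exact card_symmDiff_add_two_mul_card_inter _ _

lemma mem_internal_or_deg_le_one (G : Graph) (v : Node) : v ∈ internal G ∨ deg G v ≤ 1 := by
  by_cases hv : v ∈ nodes G
  · by_cases h1 : deg G v = 1
    · exact Or.inr h1.le
    · exact Or.inl (Finset.mem_filter.mpr ⟨hv, h1⟩)
  · exact Or.inr (by rw [← deg_pos_iff] at hv; omega)

lemma IsGraph.subset {G H : Graph} (hG : IsGraph G) (h : H ⊆ G) : IsGraph H :=
  fun e he => hG e (h he)

lemma sum_deg_eq_two_mul_card {C : Graph} (hC : IsGraph C) :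
    ∑ v ∈ nodes C, deg C v = 2 * C.card := by
  have hbelow : ∀ e ∈ C, (nodes C).bipartiteBelow (fun v e => v ∈ e) e = e := by
    intro e he
    ext v
    simp only [Finset.mem_bipartiteBelow, and_iff_right_iff_imp]
    exact mem_nodes_of_mem he
  calc ∑ v ∈ nodes C, deg C v
      = ∑ e ∈ C, ((nodes C).bipartiteBelow (fun v e => v ∈ e) e).card :=
        Finset.sum_card_bipartiteAbove_eq_sum_card_bipartiteBelow _
    _ = ∑ e ∈ C, 2 := Finset.sum_congr rfl fun e he => by rw [hbelow e he, hC e he]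
    _ = 2 * C.card := by rw [Finset.sum_const, smul_eq_mul, mul_comm]

lemma even_card_ports {C : Graph} (hC : IsGraph C) (hdeg : ∀ v ∈ nodes C, deg C v ≤ 2) :
    Even (ports C).card := by
  have hinternal : ∀ v ∈ internal C, deg C v = 2 := by
    intro v hv
    obtain ⟨hvC, hv1⟩ := Finset.mem_filter.mp hv
    have := deg_pos_iff.mpr hvC
    have := hdeg v hvC
    omega
  have hports : ∀ v ∈ ports C, deg C v = 1 := fun v hv => (Finset.mem_filter.mp hv).2
  have hsplit := Finset.sum_filter_add_sum_filter_not (nodes C) (fun v => deg C v = 1) (deg C)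
  rw [← ports, ← internal, Finset.sum_congr rfl hports, Finset.sum_congr rfl hinternal,
    sum_deg_eq_two_mul_card hC] at hsplit
  simp only [Finset.sum_const, smul_eq_mul, mul_one] at hsplit
  exact Nat.even_iff.mpr (by omega)

def Adj (D : Graph) (a b : Node) : Prop := ({a, b} : Finset Node) ∈ D

def Reachable (D : Graph) (p : Node) : Node → Prop := Relation.ReflTransGen (Adj D) p

open Classical in
noncomputable def component (D : Graph) (p : Node) : Graph :=
  D.filter fun e => ∃ x ∈ e, Reachable D p x

section Component

variable {D : Graph} {p v : Node}

lemma adj_symm {a b : Node} (h : Adj D a b) : Adj D b a := by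
  rwa [Adj, Finset.pair_comm]

lemma Reachable.of_mem_edge (hD : IsGraph D) {e : Finset Node} (he : e ∈ D) {x y : Node}
    (hx : x ∈ e) (hy : y ∈ e) (hreach : Reachable D p x) : Reachable D p y := by
  obtain ⟨a, b, hab, rfl⟩ := Finset.card_eq_two.mp (hD e he)
  by_cases hxy : x = y
  · exact hxy ▸ hreach
  · have hedge : ({x, y} : Finset Node) = {a, b} := by
      simp only [Finset.mem_insert, Finset.mem_singleton] at hx hy
      rcases hx with rfl | rfl <;> rcases hy with rfl | rfl <;>
        first | exact absurd rfl hxy | rfl | exact Finset.pair_comm _ _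
    exact hreach.tail (by rw [Adj, hedge]; exact he)

lemma mem_component_iff {e : Finset Node} :
    e ∈ component D p ↔ e ∈ D ∧ ∃ x ∈ e, Reachable D p x := by
  classical
  exact Finset.mem_filter

lemma component_subset : component D p ⊆ D := fun _ he => (mem_component_iff.mp he).1

lemma mem_component {e : Finset Node} (he : e ∈ D) (hv : v ∈ e) (hreach : Reachable D p v) :
    e ∈ component D p :=
  mem_component_iff.mpr ⟨he, v, hv, hreach⟩

lemma reachable_of_mem_nodes_component (hD : IsGraph D) (hv : v ∈ nodes (component D p)) :
    Reachable D p v := by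
  obtain ⟨e, he, hve⟩ := mem_nodes_iff.mp hv
  obtain ⟨heD, x, hx, hreach⟩ := mem_component_iff.mp he
  exact hreach.of_mem_edge hD heD hx hve

lemma filter_component (hreach : Reachable D p v) :
    (component D p).filter (v ∈ ·) = D.filter (v ∈ ·) := by
  ext e
  simp only [Finset.mem_filter]
  exact ⟨fun ⟨he, hv⟩ => ⟨component_subset he, hv⟩,
    fun ⟨he, hv⟩ => ⟨mem_component he hv hreach, hv⟩⟩

lemma deg_component (hreach : Reachable D p v) : deg (component D p) v = deg D v := by
  rw [deg, deg, filter_component hreach]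

lemma deg_inter_component (A : Graph) (hreach : Reachable D p v) :
    deg (A ∩ component D p) v = deg (A ∩ D) v := by
  rw [deg, deg, Finset.filter_inter_distrib, Finset.filter_inter_distrib, filter_component hreach]

lemma Reachable.component (hreach : Reachable D p v) : Reachable (component D p) p v := by
  induction hreach with
  | refl => exact Relation.ReflTransGen.refl
  | @tail b c hb hbc ih => exact ih.tail (mem_component hbc (Finset.mem_insert_self b _) hb)

lemma exists_walk_of_reflTransGen {C : Graph} {u v : Node}
    (h : Relation.ReflTransGen (Adj C) u v) :
    ∃ (n : ℕ) (f : ℕ → Node), f 0 = u ∧ f n = v ∧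
      ∀ i < n, ({f i, f (i + 1)} : Finset Node) ∈ C := by
  induction h with
  | refl => exact ⟨0, fun _ => u, rfl, rfl, by omega⟩
  | @tail b c _ hbc ih =>
    obtain ⟨n, f, hf0, hfn, hstep⟩ := ih
    refine ⟨n + 1, fun i => if i ≤ n then f i else c, by simpa using hf0, by simp, ?_⟩
    intro i hi
    rcases Nat.lt_succ_iff_lt_or_eq.mp hi with hi | rfl
    · simpa [hi.le, Nat.succ_le_of_lt hi] using hstep i hi
    · simpa [hfn, Adj] using hbc

lemma connected_component (hD : IsGraph D) (hp : p ∈ nodes D) : Connected (component D p) := by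
  have hreach : ∀ v ∈ nodes (component D p), Relation.ReflTransGen (Adj (component D p)) p v :=
    fun v hv => (reachable_of_mem_nodes_component hD hv).component
  refine ⟨?_, fun a ha b hb _ => exists_walk_of_reflTransGen ?_⟩
  · obtain ⟨e, he, hpe⟩ := mem_nodes_iff.mp hp
    exact ⟨e, mem_component he hpe Relation.ReflTransGen.refl⟩
  · have hback : Relation.ReflTransGen (Adj (component D p)) a p :=
      Relation.ReflTransGen.mono (fun _ _ => adj_symm) _ _ (hreach a ha).swap
    exact hback.trans (hreach b hb)

lemma isSimplePath_component {q : Node} (hD : IsGraph D) (hdeg : ∀ v ∈ nodes D, deg D v ≤ 2)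
    (hports : ports D = {p, q}) : IsSimplePath (component D p) p q := by
  set C := component D p
  have hdegC : ∀ v ∈ nodes C, deg C v = deg D v :=
    fun v hv => deg_component (reachable_of_mem_nodes_component hD hv)
  have hnodes : nodes C ⊆ nodes D := nodes_mono component_subset
  obtain ⟨hpD, hdegp⟩ := Finset.mem_filter.mp (hports ▸ Finset.mem_insert_self p {q})
  have hpC : p ∈ ports C := by
    obtain ⟨e, he, hpe⟩ := mem_nodes_iff.mp hpD
    have hp : p ∈ nodes C := mem_nodes_of_mem (mem_component he hpe .refl) hpe
    exact Finset.mem_filter.mpr ⟨hp, hdegC p hp ▸ hdegp⟩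
  have hsub : ports C ⊆ {p, q} := by
    intro v hv
    obtain ⟨hvC, hv1⟩ := Finset.mem_filter.mp hv
    exact hports ▸ Finset.mem_filter.mpr ⟨hnodes hvC, hdegC v hvC ▸ hv1⟩
  have heven : Even (ports C).card :=
    even_card_ports (hD.subset component_subset)
      (fun v hv => hdegC v hv ▸ hdeg v (hnodes hv))
  -- a proper subset of `{p, q}` containing `p` is `{p}`, which has odd cardinality
  have hportsC : ports C = {p, q} := by
    by_contra hne
    have hlt := Finset.card_lt_card (Finset.ssubset_iff_subset_ne.mpr ⟨hsub, hne⟩)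
    have hpos := Finset.card_pos.mpr ⟨p, hpC⟩
    have hle := Finset.card_le_two (a := p) (b := q)
    exact Nat.not_even_one (by rwa [show (ports C).card = 1 by omega] at heven)
  refine ⟨connected_component hD hpD, hportsC, fun v hv hvp hvq => ?_⟩
  have hv1 : deg C v ≠ 1 := fun h1 => by
    have : v ∈ ({p, q} : Finset Node) := hportsC ▸ Finset.mem_filter.mpr ⟨hv, h1⟩
    simp only [Finset.mem_insert, Finset.mem_singleton] at this
    tauto
  rw [hdegC v hv] at hv1 ⊢
  have := deg_pos_iff.mpr (hnodes hv)
  have := hdeg v (hnodes hv)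
  omega

end Component

section SymmDiff

variable {G W W' : Graph}

lemma symmDiff_subset_of_subset (hW : W ⊆ G) (hW' : W' ⊆ G) : W ∆ W' ⊆ G :=
  Finset.symmDiff_subset_union.trans (Finset.union_subset hW hW')

lemma mem_rest_ports_iff {r : Node} (hW : W ⊆ G) (hr : r ∈ ports G) :
    r ∈ rest W (ports G) ↔ deg W r = 1 := by
  have hle : deg W r ≤ 1 := (deg_mono hW r).trans (Finset.mem_filter.mp hr).2.le
  rw [rest, Finset.mem_inter, and_iff_right hr, ← deg_pos_iff]
  omega

lemma deg_symmDiff_of_mem_ports {r : Node} (hW : W ⊆ G) (hW' : W' ⊆ G) (hr : r ∈ ports G) :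
    deg (W ∆ W') r = if r ∈ rest W (ports G) ∆ rest W' (ports G) then 1 else 0 := by
  have hdegG : deg G r = 1 := (Finset.mem_filter.mp hr).2
  have := deg_mono hW r
  have := deg_mono hW' r
  have := deg_mono (symmDiff_subset_of_subset hW hW') r
  have := deg_symmDiff_add_two_mul_deg_inter W W' r
  simp only [Finset.mem_symmDiff, mem_rest_ports_iff hW hr, mem_rest_ports_iff hW' hr]
  split_ifs <;> omega

lemma deg_symmDiff_of_mem_internal {v : Node} (hW : IsKekule G W) (hW' : IsKekule G W')
    (hv : v ∈ internal G) : deg (W ∆ W') v + 2 * deg (W ∩ W') v = 2 := by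
  rw [deg_symmDiff_add_two_mul_deg_inter, hW.2 v hv, hW'.2 v hv]

lemma deg_symmDiff_le_two (hW : IsKekule G W) (hW' : IsKekule G W') (v : Node) :
    deg (W ∆ W') v ≤ 2 := by
  rcases mem_internal_or_deg_le_one G v with hv | hv
  · have := deg_symmDiff_of_mem_internal hW hW' hv
    omega
  · exact (deg_mono (symmDiff_subset_of_subset hW.1 hW'.1) v).trans (hv.trans one_le_two)

lemma ports_symmDiff (hW : IsKekule G W) (hW' : IsKekule G W') :
    ports (W ∆ W') = rest W (ports G) ∆ rest W' (ports G) := by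
  have hDG := symmDiff_subset_of_subset hW.1 hW'.1
  ext r
  constructor
  · intro hr
    obtain ⟨hrD, hr1⟩ := Finset.mem_filter.mp hr
    rcases mem_internal_or_deg_le_one G r with hrG | hrG
    · have := deg_symmDiff_of_mem_internal hW hW' hrG
      omega
    · have hrP : r ∈ ports G := Finset.mem_filter.mpr
        ⟨nodes_mono hDG hrD, le_antisymm hrG (hr1 ▸ deg_mono hDG r)⟩
      rw [deg_symmDiff_of_mem_ports hW.1 hW'.1 hrP] at hr1
      by_contra hr'
      simp [hr'] at hr1
  · intro hr
    have hrP : r ∈ ports G := by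
      rcases Finset.mem_symmDiff.mp hr with ⟨h, _⟩ | ⟨h, _⟩ <;>
        exact (Finset.mem_inter.mp h).1
    have hr1 : deg (W ∆ W') r = 1 := by rw [deg_symmDiff_of_mem_ports hW.1 hW'.1 hrP, if_pos hr]
    exact Finset.mem_filter.mpr ⟨deg_pos_iff.mp (by omega), hr1⟩

lemma isAlternating_component (hG : IsGraph G) (hW : IsKekule G W) (hW' : IsKekule G W')
    (p : Node) : IsAlternating G (component (W ∆ W') p) W := by
  set D := W ∆ W'
  set C := component D p
  have hDG : D ⊆ G := symmDiff_subset_of_subset hW.1 hW'.1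
  have hD : IsGraph D := hG.subset hDG
  have hnodes : nodes C ⊆ nodes D := nodes_mono component_subset
  have hdegC : ∀ v ∈ nodes C, deg C v = deg D v :=
    fun v hv => deg_component (reachable_of_mem_nodes_component hD hv)
  have hinternal : ∀ v ∈ nodes D, v ∈ internal G → deg D v = 2 := by
    intro v hv hvG
    have hsum : deg D v + 2 * deg (W ∩ W') v = 2 := deg_symmDiff_of_mem_internal hW hW' hvG
    have hpos : 0 < deg D v := deg_pos_iff.mpr hv
    omega
  refine ⟨hW.1, ⟨component_subset.trans hDG, fun v hv hvG => ?_⟩, Finset.inter_subset_right,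
    fun v hv => ?_⟩
  · rw [hdegC v hv]
    exact hinternal v (hnodes hv) hvG
  · obtain ⟨hvC, hv1⟩ := Finset.mem_filter.mp hv
    rw [hdegC v hvC] at hv1
    have hvG : v ∈ internal G := (mem_internal_or_deg_le_one G v).resolve_right fun hle => by
      have := deg_mono hDG v
      have := deg_pos_iff.mpr (hnodes hvC)
      omega
    -- `W ∆ D = W'`, so the degree identity for the pair `(W, D)` computes `deg (W ∩ D) v`
    have hsum := deg_symmDiff_add_two_mul_deg_inter W D v
    rw [symmDiff_symmDiff_cancel_left, hW.2 v hvG, hW'.2 v hvG, hinternal v (hnodes hvC) hvG]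
      at hsum
    rw [deg_inter_component W (reachable_of_mem_nodes_component hD hvC)]
    omega

end SymmDiff

lemma exists_isKekule_rest_symmDiff_eq_pair {G W : Graph} (homni : Omniconjugated G)
    (hW : IsKekule G W) {p q : Node} (hp : p ∈ ports G) (hq : q ∈ ports G) (hpq : p ≠ q) :
    ∃ W', IsKekule G W' ∧ rest W (ports G) ∆ rest W' (ports G) = {p, q} := by
  set g := rest W (ports G)
  have hg : g ∈ KP G := ⟨W, hW, rfl⟩
  rw [homni.2] at hg
  have hflip : g ∆ {p, q} ∈ KP G := by
    rw [homni.2]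
    refine ⟨Finset.symmDiff_subset_union.trans (Finset.union_subset hg.1 ?_), ?_⟩
    · exact Finset.insert_subset hp (Finset.singleton_subset_iff.mpr hq)
    · have := card_symmDiff_add_two_mul_card_inter g {p, q}
      rw [Finset.card_pair hpq] at this
      have := hg.2
      omega
  obtain ⟨W', hW', hrest⟩ := hflip
  exact ⟨W', hW', by rw [hrest, symmDiff_symmDiff_cancel_left]⟩

/-- In an omniconjugated graph, for every Kekulé state `W` and
distinct ports `p`, `q` there is a simple alternating path from `p` to `q`. -/
theorem statement15 (G : Graph) (hG : IsGraph G) (homni : Omniconjugated G)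
    (W : Graph) (hW : IsKekule G W)
    (p q : Node) (hp : p ∈ ports G) (hq : q ∈ ports G) (hpq : p ≠ q) :
    ∃ C : Graph, C ⊆ G ∧ IsSimplePath C p q ∧ IsAlternating G C W := by
  obtain ⟨W', hW', hrest⟩ := exists_isKekule_rest_symmDiff_eq_pair homni hW hp hq hpq
  have hDG : W ∆ W' ⊆ G := symmDiff_subset_of_subset hW.1 hW'.1
  refine ⟨component (W ∆ W') p, component_subset.trans hDG, ?_,
    isAlternating_component hG hW hW' p⟩
  exact isSimplePath_component (hG.subset hDG) (fun v _ => deg_symmDiff_le_two hW hW' v)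
    (by rw [ports_symmDiff hW hW', hrest])

end Kekule
end
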